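/- Assume σ > 0. Then there exist R > 0 and sequences (d_n)_{n≥1}, (e_n)_{n≥1} of real numbers with d_1 = e_1 = σ/√2 such that both series ∑_{n=1}^∞ d_n q^{−n/2} and ∑_{n=1}^∞ e_n q^{−n/2} converge absolutely for every q ∈ ℂ with |q| > R, and for every real q > R one has 1/(ζ_{N+1}(q) − 1) = ∑_{n=1}^∞ d_n q^{−n/2} and 1/(ζ̂_{N̂+1}(q) + 1) = ∑_{n=1}^∞ e_n q^{−n/2}. -/

import Mathlib

/-- The Laplace exponent of a hyperexponential Lévy process, extended to a rational
function on `ℂ`. -/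
noncomputable def psi (σ A : ℝ) (N Nh : ℕ) (aa ρ ah ρh : ℕ → ℝ) (z : ℂ) : ℂ :=
  (σ : ℂ) ^ 2 * z ^ 2 / 2 + (A : ℂ) * z
    + z * ∑ ℓ ∈ Finset.Icc 1 N, (aa ℓ : ℂ) / ((ρ ℓ : ℂ) - z)
    - z * ∑ ℓ ∈ Finset.Icc 1 Nh, (ah ℓ : ℂ) / ((ρh ℓ : ℂ) + z)

/-!
With `u = 1 / ζ`, the equation `psi ζ = q` says `u ^ 2 * psi (1 / u) = q * u ^ 2`, and
`Q u = u ^ 2 * psi (1 / u)` is analytic at `0` with `Q 0 = σ ^ 2 / 2`. Taking square roots,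
`q ^ (-1/2) = u / √(Q u)`; the right side is analytic in `u` with derivative `√2 / σ` at `0`, so by
the analytic inverse function theorem `u`, and with it `1 / (ζ + s) = u / (1 + s u)`, is an
analytic function of `q ^ (-1/2)` vanishing at `0` with derivative `σ / √2`. Its Taylor series is
the expansion. The negative root `-ζ̂` is the positive root of `z ↦ psi (-z)`, the Laplace
exponent with the two jump sides exchanged.
-/

open Filter Topology

lemma neg_succ_div_two_eq_ofReal (n : ℕ) :
    -((n : ℂ) + 1) / 2 = ((-(1 / 2 : ℝ) * (n + 1 : ℕ) : ℝ) : ℂ) := by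
  push_cast; ring

lemma norm_cpow_neg_succ_div_two (q : ℂ) (n : ℕ) :
    ‖q ^ (-((n : ℂ) + 1) / 2)‖ = (‖q‖ ^ (-(1 / 2 : ℝ))) ^ (n + 1) := by
  rw [neg_succ_div_two_eq_ofReal, Complex.norm_cpow_real, Real.rpow_mul_natCast (norm_nonneg q)]

lemma ofReal_cpow_neg_succ_div_two {q : ℝ} (hq : 0 ≤ q) (n : ℕ) :
    (q : ℂ) ^ (-((n : ℂ) + 1) / 2) = ((q ^ (-(1 / 2 : ℝ))) ^ (n + 1) : ℝ) := by
  rw [neg_succ_div_two_eq_ofReal, ← Complex.ofReal_cpow hq, Real.rpow_mul_natCast hq]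

lemma rpow_neg_half_lt {r t : ℝ} (hr : 0 < r) (ht : r⁻¹ ^ 2 < t) : t ^ (-(1 / 2 : ℝ)) < r := by
  calc t ^ (-(1 / 2 : ℝ)) < (r⁻¹ ^ 2) ^ (-(1 / 2 : ℝ)) :=
        Real.rpow_lt_rpow_of_neg (by positivity) ht (by norm_num)
    _ = r := by
        rw [← Real.rpow_natCast, ← Real.rpow_mul (by positivity)]
        norm_num [Real.rpow_neg_one]

lemma AnalyticAt.exists_hasSum_coeff_succ {G : ℂ → ℂ} (hG : AnalyticAt ℂ G 0) (hG0 : G 0 = 0) :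
    ∃ r > (0 : ℝ), ∃ c : ℕ → ℂ, c 0 = deriv G 0 ∧ ∀ x : ℂ, ‖x‖ < r →
      HasSum (fun n ↦ c n * x ^ (n + 1)) (G x) ∧ Summable (fun n ↦ ‖c n‖ * ‖x‖ ^ (n + 1)) := by
  obtain ⟨p, r, hp⟩ := hG
  obtain ⟨r₀, hr₀, hr₀r⟩ := ENNReal.lt_iff_exists_nnreal_btwn.1 hp.r_pos
  refine ⟨r₀, by exact_mod_cast hr₀, fun n ↦ p.coeff (n + 1), ?_, fun x hx ↦ ⟨?_, ?_⟩⟩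
  · simp [hp.hasFPowerSeriesAt.deriv]
  · have hx' : x ∈ Metric.eball (0 : ℂ) r := by
      rw [Metric.mem_eball, edist_zero_right]
      exact lt_trans (by exact_mod_cast hx) hr₀r
    have hsum := hp.hasSum hx'
    simp only [zero_add, FormalMultilinearSeries.apply_eq_pow_smul_coeff, smul_eq_mul] at hsum
    rw [← hasSum_nat_add_iff' 1] at hsum
    have hc0 : p.coeff 0 = 0 := (hp.coeff_zero 1).trans hG0
    simpa [mul_comm, hc0] using hsum
  · have hx' : ((‖x‖₊ : NNReal) : ENNReal) < p.radius :=
      lt_of_lt_of_le (lt_trans (by exact_mod_cast hx) hr₀r) hp.r_le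
    have := (summable_nat_add_iff 1).2 (p.summable_norm_mul_pow hx')
    simpa [FormalMultilinearSeries.norm_apply_eq_norm_coef] using this

lemma AnalyticAt.exists_analyticAt_left_inverse {𝕜 : Type*} [NontriviallyNormedField 𝕜]
    [CompleteSpace 𝕜] [CharZero 𝕜] {f : 𝕜 → 𝕜} {a : 𝕜} (hf : AnalyticAt 𝕜 f a)
    (hf' : deriv f a ≠ 0) :
    ∃ g : 𝕜 → 𝕜, AnalyticAt 𝕜 g (f a) ∧ HasDerivAt g (deriv f a)⁻¹ (f a) ∧
      ∀ᶠ x in 𝓝 a, g (f x) = x :=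
  ⟨_, hf.analyticAt_localInverse hf', (hf.hasStrictDerivAt.to_localInverse hf').hasDerivAt,
    hf.hasStrictDerivAt.eventually_left_inverse hf'⟩

lemma ofReal_cpow_half {y : ℝ} (hy : 0 ≤ y) : (y : ℂ) ^ (1 / 2 : ℂ) = (√y : ℝ) := by
  rw [Real.sqrt_eq_rpow, Complex.ofReal_cpow hy]; push_cast; rfl

lemma tendsto_atTop_of_le_comp {f ζ : ℝ → ℝ} (hf : MonotoneOn f (Set.Ici 0))
    (h : ∀ᶠ q in atTop, 0 ≤ ζ q ∧ q ≤ f (ζ q)) : Tendsto ζ atTop atTop := by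
  refine tendsto_atTop.2 fun b ↦ ?_
  filter_upwards [h, eventually_gt_atTop (f (max b 0))] with q ⟨hζ0, hq⟩ hfq
  by_contra! hlt
  have : f (ζ q) ≤ f (max b 0) :=
    hf hζ0 (le_max_right b 0 : (0:ℝ) ≤ max b 0) (hlt.le.trans (le_max_left b 0))
  linarith

theorem exists_series_of_eventually_eq_comp_rpow {G : ℂ → ℂ} (hG : AnalyticAt ℂ G 0)
    (hG0 : G 0 = 0) {c : ℝ} (hG1 : deriv G 0 = c) {Z : ℝ → ℝ}
    (hZ : ∀ᶠ q in atTop, (Z q : ℂ) = G (q ^ (-(1 / 2 : ℝ)) : ℝ)) :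
    ∃ R > (0 : ℝ), ∃ d : ℕ → ℝ, d 0 = c ∧
      (∀ q : ℂ, R < ‖q‖ → Summable fun n : ℕ ↦ ‖(d n : ℂ) * q ^ (-((n : ℂ) + 1) / 2)‖) ∧
      ∀ q : ℝ, R < q → (Z q : ℂ) = ∑' n : ℕ, (d n : ℂ) * (q : ℂ) ^ (-((n : ℂ) + 1) / 2) := by
  obtain ⟨r, hr, a, ha0, ha⟩ := hG.exists_hasSum_coeff_succ hG0
  obtain ⟨q₀, hq₀⟩ := eventually_atTop.1 hZ
  have hsmall : ∀ t : ℝ, r⁻¹ ^ 2 < t → ‖((t ^ (-(1 / 2 : ℝ)) : ℝ) : ℂ)‖ < r := fun t ht ↦ by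
    rw [Complex.norm_real, Real.norm_of_nonneg (Real.rpow_nonneg (by nlinarith) _)]
    exact rpow_neg_half_lt hr ht
  refine ⟨max q₀ (r⁻¹ ^ 2), by positivity, fun n ↦ (a n).re, by simp [ha0, hG1], ?_, ?_⟩
  · intro q hq
    have hlarge : r⁻¹ ^ 2 < ‖q‖ := (le_max_right _ _).trans_lt hq
    have := (ha _ (hsmall _ hlarge)).2
    rw [Complex.norm_real, Real.norm_of_nonneg (Real.rpow_nonneg (norm_nonneg q) _)] at this
    refine this.of_nonneg_of_le (fun n ↦ norm_nonneg _) fun n ↦ ?_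
    rw [norm_mul, norm_cpow_neg_succ_div_two, Complex.norm_real]
    gcongr
    exact Complex.abs_re_le_norm _
  · intro q hq
    have hq0 : 0 ≤ q := (sq_nonneg _).trans ((le_max_right _ _).trans hq.le)
    set x : ℝ := q ^ (-(1 / 2 : ℝ))
    have hsum := (ha x (hsmall q ((le_max_right _ _).trans_lt hq))).1
    rw [← hq₀ q ((le_max_left _ _).trans hq.le)] at hsum
    have hre : HasSum (fun n ↦ (a n).re * x ^ (n + 1)) (Z q) := by
      simpa [← Complex.ofReal_pow, Complex.re_mul_ofReal] using hsum.mapL Complex.reCLM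
    refine (HasSum.tsum_eq ?_).symm
    simp only [ofReal_cpow_neg_succ_div_two hq0, ← Complex.ofReal_mul]
    exact Complex.hasSum_ofReal.2 hre

lemma exists_analyticAt_inverse_div_sqrt {Q : ℂ → ℂ} (hQ : AnalyticAt ℂ Q 0) {c : ℝ}
    (hc : 0 < c) (hQ0 : Q 0 = (c ^ 2 : ℝ)) :
    ∃ Ψ : ℂ → ℂ, AnalyticAt ℂ Ψ 0 ∧ Ψ 0 = 0 ∧ HasDerivAt Ψ c 0 ∧
      ∀ᶠ u in 𝓝 0, Ψ (u / Q u ^ (1 / 2 : ℂ)) = u := by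
  set h : ℂ → ℂ := fun u ↦ u / Q u ^ (1 / 2 : ℂ)
  have hsqrt0 : Q 0 ^ (1 / 2 : ℂ) = c := by
    rw [hQ0, ofReal_cpow_half (sq_nonneg c), Real.sqrt_sq hc.le]
  have hc0 : (c : ℂ) ≠ 0 := by exact_mod_cast hc.ne'
  have hsqrt : AnalyticAt ℂ (fun u ↦ Q u ^ (1 / 2 : ℂ)) 0 :=
    hQ.cpow analyticAt_const (by rw [hQ0]; exact Complex.ofReal_mem_slitPlane.2 (by positivity))
  have hh : AnalyticAt ℂ h 0 := analyticAt_id.div hsqrt (by rwa [hsqrt0])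
  have hh' : deriv h 0 = (c : ℂ)⁻¹ := by
    have := (hasDerivAt_id' (0 : ℂ)).fun_div hsqrt.differentiableAt.hasDerivAt (by rwa [hsqrt0])
    rw [this.deriv, hsqrt0, zero_mul, sub_zero, one_mul]
    field_simp
  have hh0 : h 0 = 0 := by simp [h]
  obtain ⟨Ψ, hΨ, hΨ', hΨh⟩ := hh.exists_analyticAt_left_inverse (by simpa [hh'] using hc0)
  rw [hh0] at hΨ hΨ'
  rw [hh', inv_inv] at hΨ'
  exact ⟨Ψ, hΨ, by simpa [hh0] using hΨh.self_of_nhds, hΨ', hΨh⟩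

theorem exists_series_inv_add_of_eventually_eq_div_sq {Q : ℂ → ℂ} (hQ : AnalyticAt ℂ Q 0)
    {c : ℝ} (hc : 0 < c) (hQ0 : Q 0 = (c ^ 2 : ℝ)) {ζ : ℝ → ℝ} (hζ : Tendsto ζ atTop atTop)
    (hQζ : ∀ᶠ q in atTop, Q (ζ q : ℂ)⁻¹ = q / (ζ q : ℂ) ^ 2) (s : ℝ) :
    ∃ R > (0 : ℝ), ∃ d : ℕ → ℝ, d 0 = c ∧
      (∀ q : ℂ, R < ‖q‖ → Summable fun n : ℕ ↦ ‖(d n : ℂ) * q ^ (-((n : ℂ) + 1) / 2)‖) ∧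
      ∀ q : ℝ, R < q →
        ((1 / (ζ q + s) : ℝ) : ℂ) = ∑' n : ℕ, (d n : ℂ) * (q : ℂ) ^ (-((n : ℂ) + 1) / 2) := by
  obtain ⟨Ψ, hΨ, hΨ0, hΨ', hΨh⟩ := exists_analyticAt_inverse_div_sqrt hQ hc hQ0
  set G : ℂ → ℂ := fun w ↦ Ψ w / (1 + s * Ψ w)
  have hG : AnalyticAt ℂ G 0 :=
    hΨ.div (analyticAt_const.add (analyticAt_const.mul hΨ)) (by simp [hΨ0])
  have hG' : deriv G 0 = c := by
    have := hΨ'.fun_div ((hΨ'.const_mul (s : ℂ)).const_add 1) (by simp [hΨ0])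
    simpa [hΨ0] using this.deriv
  refine exists_series_of_eventually_eq_comp_rpow hG (by simp [G, hΨ0]) hG' ?_
  have hinv : Tendsto (fun q ↦ ((ζ q : ℂ))⁻¹) atTop (𝓝 0) := by
    have := (Complex.continuous_ofReal.tendsto 0).comp (tendsto_inv_atTop_zero.comp hζ)
    simpa [Function.comp_def] using this
  filter_upwards [hζ.eventually_gt_atTop (max 0 (-s)), hQζ, eventually_gt_atTop 0,
    hinv.eventually hΨh] with q hζq hQq hq hΨq
  have hζ0 : 0 < ζ q := (le_max_left _ _).trans_lt hζq
  have hζ0' : (ζ q : ℂ) ≠ 0 := by exact_mod_cast hζ0.ne'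
  have hζs : (ζ q : ℂ) + s ≠ 0 := by
    exact_mod_cast (by linarith [le_max_right 0 (-s)] : 0 < ζ q + s).ne'
  have hsqrt : (ζ q : ℂ)⁻¹ / Q (ζ q : ℂ)⁻¹ ^ (1 / 2 : ℂ) = (q ^ (-(1 / 2 : ℝ)) : ℝ) := by
    have hQq' : Q (ζ q : ℂ)⁻¹ = (q / ζ q ^ 2 : ℝ) := by push_cast; exact hQq
    simp only [hQq', ofReal_cpow_half (by positivity : 0 ≤ q / ζ q ^ 2),
      Real.sqrt_div' _ (sq_nonneg _), Real.sqrt_sq hζ0.le, Real.rpow_neg hq.le,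
      ← Real.sqrt_eq_rpow]
    have : (√q : ℂ) ≠ 0 := by exact_mod_cast (Real.sqrt_pos.2 hq).ne'
    push_cast
    field_simp
  simp only [G, ← hsqrt, hΨq]
  push_cast
  field_simp

section Hyperexponential

variable (σ A : ℝ) (N Nh : ℕ) (aa ρ ah ρh : ℕ → ℝ)

/-- `u ^ 2 * psi (1 / u)`, which extends analytically to `u = 0`. -/
noncomputable def psiReversed (u : ℂ) : ℂ :=
  (σ : ℂ) ^ 2 / 2 + (A : ℂ) * u
    + u ^ 2 * ∑ ℓ ∈ Finset.Icc 1 N, (aa ℓ : ℂ) / (u * (ρ ℓ : ℂ) - 1)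
    - u ^ 2 * ∑ ℓ ∈ Finset.Icc 1 Nh, (ah ℓ : ℂ) / (u * (ρh ℓ : ℂ) + 1)

lemma analyticAt_psiReversed : AnalyticAt ℂ (psiReversed σ A N Nh aa ρ ah ρh) 0 := by
  have hsum : ∀ (M : ℕ) (b r : ℕ → ℝ) (ε : ℂ), ε ≠ 0 →
      AnalyticAt ℂ (fun u : ℂ ↦ ∑ ℓ ∈ Finset.Icc 1 M, (b ℓ : ℂ) / (u * (r ℓ : ℂ) + ε)) 0 :=
    fun M b r ε hε ↦ Finset.analyticAt_fun_sum _ fun ℓ _ ↦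
      analyticAt_const.div ((analyticAt_id.mul analyticAt_const).add analyticAt_const) (by simpa)
  have hN := hsum N aa ρ (-1) (by norm_num)
  simp only [← sub_eq_add_neg] at hN
  exact ((analyticAt_const.add (analyticAt_const.mul analyticAt_id)).add
    ((analyticAt_id.pow 2).mul hN)).sub ((analyticAt_id.pow 2).mul (hsum Nh ah ρh 1 one_ne_zero))

lemma psiReversed_zero : psiReversed σ A N Nh aa ρ ah ρh 0 = (σ : ℂ) ^ 2 / 2 := by
  simp [psiReversed]

lemma psiReversed_inv {z : ℂ} (hz : z ≠ 0) (hρ : ∀ ℓ ∈ Finset.Icc 1 N, (ρ ℓ : ℂ) - z ≠ 0)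
    (hρh : ∀ ℓ ∈ Finset.Icc 1 Nh, (ρh ℓ : ℂ) + z ≠ 0) :
    psiReversed σ A N Nh aa ρ ah ρh z⁻¹ = psi σ A N Nh aa ρ ah ρh z / z ^ 2 := by
  have hN : ∑ ℓ ∈ Finset.Icc 1 N, (aa ℓ : ℂ) / (z⁻¹ * ρ ℓ - 1)
      = z * ∑ ℓ ∈ Finset.Icc 1 N, (aa ℓ : ℂ) / (ρ ℓ - z) := by
    rw [Finset.mul_sum]
    refine Finset.sum_congr rfl fun ℓ hℓ ↦ ?_
    rw [show z⁻¹ * ρ ℓ - 1 = (ρ ℓ - z) / z by field_simp]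
    field_simp [hρ ℓ hℓ]
  have hNh : ∑ ℓ ∈ Finset.Icc 1 Nh, (ah ℓ : ℂ) / (z⁻¹ * ρh ℓ + 1)
      = z * ∑ ℓ ∈ Finset.Icc 1 Nh, (ah ℓ : ℂ) / (ρh ℓ + z) := by
    rw [Finset.mul_sum]
    refine Finset.sum_congr rfl fun ℓ hℓ ↦ ?_
    rw [show z⁻¹ * ρh ℓ + 1 = (ρh ℓ + z) / z by field_simp]
    field_simp [hρh ℓ hℓ]
  rw [psiReversed, hN, hNh, psi]
  field_simp

lemma psi_neg (z : ℂ) :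
    psi σ A N Nh aa ρ ah ρh (-z) = psi σ (-A) Nh N ah ρh aa ρ z := by
  simp only [psi, sub_neg_eq_add, ← sub_eq_add_neg]
  push_cast
  ring

lemma psi_ofReal (x : ℝ) :
    psi σ A N Nh aa ρ ah ρh x = (σ ^ 2 * x ^ 2 / 2 + A * x
      + x * ∑ ℓ ∈ Finset.Icc 1 N, aa ℓ / (ρ ℓ - x)
      - x * ∑ ℓ ∈ Finset.Icc 1 Nh, ah ℓ / (ρh ℓ + x) : ℝ) := by
  simp only [psi]
  push_cast
  ring

lemma le_of_psi_ofReal_eq (hpos : ∀ ℓ ∈ Finset.Icc 1 N, 0 < aa ℓ)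
    (hposh : ∀ ℓ ∈ Finset.Icc 1 Nh, 0 < ah ℓ) (hρh : ∀ ℓ ∈ Finset.Icc 1 Nh, 0 ≤ ρh ℓ)
    {x q : ℝ} (hx : 0 < x) (hρ : ∀ ℓ ∈ Finset.Icc 1 N, ρ ℓ < x)
    (hq : psi σ A N Nh aa ρ ah ρh x = q) : q ≤ σ ^ 2 * x ^ 2 / 2 + |A| * x := by
  rw [psi_ofReal, Complex.ofReal_inj] at hq
  have hN : ∑ ℓ ∈ Finset.Icc 1 N, aa ℓ / (ρ ℓ - x) ≤ 0 := Finset.sum_nonpos fun ℓ hℓ ↦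
    div_nonpos_of_nonneg_of_nonpos (hpos ℓ hℓ).le (by linarith [hρ ℓ hℓ])
  have hNh : 0 ≤ ∑ ℓ ∈ Finset.Icc 1 Nh, ah ℓ / (ρh ℓ + x) := Finset.sum_nonneg fun ℓ hℓ ↦
    div_nonneg (hposh ℓ hℓ).le (by linarith [hρh ℓ hℓ])
  nlinarith [le_abs_self A, mul_nonpos_of_nonneg_of_nonpos hx.le hN, mul_nonneg hx.le hNh]

theorem exists_series_inv_add_of_psi_eq (hσ : 0 < σ) (hpos : ∀ ℓ ∈ Finset.Icc 1 N, 0 < aa ℓ)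
    (hposh : ∀ ℓ ∈ Finset.Icc 1 Nh, 0 < ah ℓ) {b : ℝ} (hb : 0 ≤ b)
    (hρ : ∀ ℓ ∈ Finset.Icc 1 N, ρ ℓ ≤ b) (hρh : ∀ ℓ ∈ Finset.Icc 1 Nh, 0 ≤ ρh ℓ)
    {ζ : ℝ → ℝ} (hζ : ∀ q : ℝ, 0 < q → b < ζ q ∧ psi σ A N Nh aa ρ ah ρh (ζ q) = q) (s : ℝ) :
    ∃ R > (0 : ℝ), ∃ d : ℕ → ℝ, d 0 = σ / √2 ∧
      (∀ q : ℂ, R < ‖q‖ → Summable fun n : ℕ ↦ ‖(d n : ℂ) * q ^ (-((n : ℂ) + 1) / 2)‖) ∧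
      ∀ q : ℝ, R < q →
        ((1 / (ζ q + s) : ℝ) : ℂ) = ∑' n : ℕ, (d n : ℂ) * (q : ℂ) ^ (-((n : ℂ) + 1) / 2) := by
  have hζ0 : ∀ q : ℝ, 0 < q → 0 < ζ q := fun q hq ↦ hb.trans_lt (hζ q hq).1
  have hρζ : ∀ q : ℝ, 0 < q → ∀ ℓ ∈ Finset.Icc 1 N, ρ ℓ < ζ q :=
    fun q hq ℓ hℓ ↦ (hρ ℓ hℓ).trans_lt (hζ q hq).1
  have htendsto : Tendsto ζ atTop atTop := by
    refine tendsto_atTop_of_le_comp (f := fun x ↦ σ ^ 2 * x ^ 2 / 2 + |A| * x)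
      (fun x hx y _ hxy ↦ by dsimp only; gcongr) ?_
    filter_upwards [eventually_gt_atTop 0] with q hq
    exact ⟨(hζ0 q hq).le, le_of_psi_ofReal_eq σ A N Nh aa ρ ah ρh hpos hposh hρh (hζ0 q hq)
      (hρζ q hq) (hζ q hq).2⟩
  refine exists_series_inv_add_of_eventually_eq_div_sq
    (analyticAt_psiReversed σ A N Nh aa ρ ah ρh)
    (by positivity) ?_ htendsto ?_ s
  · rw [psiReversed_zero, div_pow, Real.sq_sqrt zero_le_two]
    push_cast
    rfl
  · filter_upwards [eventually_gt_atTop 0] with q hq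
    rw [psiReversed_inv, (hζ q hq).2]
    · exact_mod_cast (hζ0 q hq).ne'
    · intro ℓ hℓ
      exact_mod_cast (sub_neg.2 (hρζ q hq ℓ hℓ)).ne
    · intro ℓ hℓ
      exact_mod_cast (add_pos_of_nonneg_of_pos (hρh ℓ hℓ) (hζ0 q hq)).ne'

end Hyperexponential

lemma nonneg_and_le_of_increasing {ρ : ℕ → ℝ} {N : ℕ} (hρ0 : ρ 0 = 0)
    (hmono : ∀ i j, i < j → j ≤ N → ρ i < ρ j) {ℓ : ℕ} (hℓ : ℓ ≤ N) : 0 ≤ ρ ℓ ∧ ρ ℓ ≤ ρ N := by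
  constructor
  · rcases Nat.eq_zero_or_pos ℓ with rfl | hℓ0
    · exact hρ0.ge
    · exact hρ0 ▸ (hmono 0 ℓ hℓ0 hℓ).le
  · rcases hℓ.lt_or_eq with hlt | rfl
    · exact (hmono ℓ N hlt le_rfl).le
    · exact le_rfl

/-- For `σ > 0`, `1/(ζ_{N+1}(q) - 1) = ∑_{n≥1} d_n q^{-n/2}` and
`1/(ζ̂_{N̂+1}(q) + 1) = ∑_{n≥1} e_n q^{-n/2}` with `d_1 = e_1 = σ/√2`, both series
converging absolutely for `|q| > R`.  Here `d n, e n` denote the paper's `d_{n+1}, e_{n+1}`. -/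
theorem shifted_reciprocal_extra_roots_series_sigma_pos
    (σ A : ℝ) (N Nh : ℕ) (aa ρ ah ρh : ℕ → ℝ)
    (hσ : 0 < σ)
    (hpos : ∀ ℓ ∈ Finset.Icc 1 N, 0 < aa ℓ)
    (hposh : ∀ ℓ ∈ Finset.Icc 1 Nh, 0 < ah ℓ)
    (hρ0 : ρ 0 = 0) (hρh0 : ρh 0 = 0)
    (hmono : ∀ i j, i < j → j ≤ N → ρ i < ρ j)
    (hmonoh : ∀ i j, i < j → j ≤ Nh → ρh i < ρh j)
    (ζM ζhM : ℝ → ℝ)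
    (hζM : ∀ q : ℝ, 0 < q → ρ N < ζM q ∧ psi σ A N Nh aa ρ ah ρh (ζM q : ℂ) = (q : ℂ))
    (hζhM : ∀ q : ℝ, 0 < q → ρh Nh < ζhM q ∧
        psi σ A N Nh aa ρ ah ρh (-(ζhM q : ℝ) : ℂ) = (q : ℂ)) :
    ∃ R > (0 : ℝ), ∃ d e : ℕ → ℝ, d 0 = σ / Real.sqrt 2 ∧ e 0 = σ / Real.sqrt 2 ∧
      (∀ q : ℂ, R < ‖q‖ →
        Summable (fun n : ℕ => ‖(d n : ℂ) * q ^ (-((n : ℂ) + 1) / 2)‖) ∧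
        Summable (fun n : ℕ => ‖(e n : ℂ) * q ^ (-((n : ℂ) + 1) / 2)‖)) ∧
      (∀ q : ℝ, R < q →
        ((1 / (ζM q - 1) : ℝ) : ℂ) = ∑' n : ℕ, (d n : ℂ) * (q : ℂ) ^ (-((n : ℂ) + 1) / 2) ∧
        ((1 / (ζhM q + 1) : ℝ) : ℂ) = ∑' n : ℕ, (e n : ℂ) * (q : ℂ) ^ (-((n : ℂ) + 1) / 2)) := by
  have hρ := fun ℓ (hℓ : ℓ ∈ Finset.Icc 1 N) ↦
    nonneg_and_le_of_increasing hρ0 hmono (Finset.mem_Icc.1 hℓ).2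
  have hρh := fun ℓ (hℓ : ℓ ∈ Finset.Icc 1 Nh) ↦
    nonneg_and_le_of_increasing hρh0 hmonoh (Finset.mem_Icc.1 hℓ).2
  obtain ⟨R₁, hR₁, d, hd0, hd, hdζ⟩ := exists_series_inv_add_of_psi_eq σ A N Nh aa ρ ah ρh hσ
    hpos hposh (nonneg_and_le_of_increasing hρ0 hmono le_rfl).1 (fun ℓ hℓ ↦ (hρ ℓ hℓ).2)
    (fun ℓ hℓ ↦ (hρh ℓ hℓ).1) hζM (-1)
  obtain ⟨R₂, hR₂, e, he0, he, heζ⟩ := exists_series_inv_add_of_psi_eq σ (-A) Nh N ah ρh aa ρ hσ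
    hposh hpos (nonneg_and_le_of_increasing hρh0 hmonoh le_rfl).1 (fun ℓ hℓ ↦ (hρh ℓ hℓ).2)
    (fun ℓ hℓ ↦ (hρ ℓ hℓ).1) (fun q hq ↦ by simpa [← psi_neg] using hζhM q hq) 1
  refine ⟨max R₁ R₂, hR₁.trans_le (le_max_left _ _), d, e, hd0, he0,
    fun q hq ↦ ⟨hd q ((le_max_left _ _).trans_lt hq), he q ((le_max_right _ _).trans_lt hq)⟩,
    fun q hq ↦ ⟨?_, heζ q ((le_max_right _ _).trans_lt hq)⟩⟩
  simpa [sub_eq_add_neg] using hdζ q ((le_max_left _ _).trans_lt hq)
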